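/- arXiv:2309.13741 — 2 statements merged into one kernel-verified Lean document; each statement's English description precedes it below -/
import Mathlib

section
/- Let A be a symmetric real n×n matrix whose characteristic polynomial equals ∏_{s=1}^{n}(X − λ_s) for real numbers λ_1,…,λ_n, and let k ≥ 1. Then trace(A^{⊙k}) = Σ_i ∏_{s∈i} λ_s, the sum running over all multisets i of size k over {1,…,n} and each product taken with multiplicity; that is, trace(A^{⊙k}) equals the complete homogeneous symmetric polynomial of degree k evaluated at λ_1,…,λ_n. -/
/-!
Writing `C(i)` for the number of tuples with underlying multiset `i`, `A^{⊙k}` is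
`D · S(A) · D` with `D = diag(C(i)^{-1/2})` and `S(A)` the sum of the Kronecker power
`A^{⊗k}` over pairs of fibres of the map from tuples to multisets. Row and column sums of
`A^{⊗k}` over a fibre depend only on the fibre, which makes `S(M) · D² · S(N) = S(MN)`;
hence `A ↦ A^{⊙k}` is multiplicative and its trace is invariant under conjugation.
Diagonalizing the symmetric matrix `A` orthogonally reduces the claim to `A = diag(μ)`, for
which `A^{⊙k} = diag(∏_{s∈i} μ_s)`; finally `μ` is a permutation of `λ`, both being the roots
of the characteristic polynomial.
-/

/-- The set of `k`-tuples over `Fin n` whose underlying multiset is `i`.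
Its cardinality is `C(i) = k!/(m_1(i)! ⋯ m_n(i)!)`. -/
def tuplesOf {n k : ℕ} (i : Sym (Fin n) k) : Finset (Fin k → Fin n) :=
  Finset.univ.filter fun p => (↑(List.ofFn p) : Multiset (Fin n)) = ↑i

/-- The `k`-th symmetric tensor power of an `n × n` real matrix, with rows and columns
indexed by the multisets of size `k` over `{1,…,n}`:
`[A^{⊙k}]_{i,j} = (1/√(C(i)·C(j))) · Σ_{p,q} ∏_ℓ A_{p_ℓ,q_ℓ}`. -/
noncomputable def symPow {n : ℕ} (k : ℕ) (A : Matrix (Fin n) (Fin n) ℝ) :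
    Matrix (Sym (Fin n) k) (Sym (Fin n) k) ℝ := fun i j =>
  (Real.sqrt (((tuplesOf i).card : ℝ) * ((tuplesOf j).card : ℝ)))⁻¹ *
    ∑ p ∈ tuplesOf i, ∑ q ∈ tuplesOf j, ∏ ℓ : Fin k, A (p ℓ) (q ℓ)

open Finset Matrix

theorem exists_perm_comp_eq_of_perm_ofFn {α : Type*} [LinearOrder α] {k : ℕ}
    {p q : Fin k → α} (h : (List.ofFn p).Perm (List.ofFn q)) :
    ∃ σ : Equiv.Perm (Fin k), p ∘ σ = q := by
  have hsorted : p ∘ Tuple.sort p = q ∘ Tuple.sort q :=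
    List.ofFn_injective <| List.Perm.eq_of_sortedLE
      (Tuple.monotone_sort p).sortedLE_ofFn (Tuple.monotone_sort q).sortedLE_ofFn
      (((Tuple.sort p).ofFn_comp_perm p).trans h |>.trans ((Tuple.sort q).ofFn_comp_perm q).symm)
  refine ⟨(Tuple.sort q).symm.trans (Tuple.sort p), funext fun x => ?_⟩
  simpa using congrFun hsorted ((Tuple.sort q).symm x)

open Polynomial in
theorem exists_perm_comp_eq_of_prod_X_sub_C_eq {R : Type*} [CommRing R] [IsDomain R]
    [LinearOrder R] {n : ℕ} {f g : Fin n → R}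
    (h : ∏ s, (X - C (f s)) = ∏ s, (X - C (g s))) :
    ∃ π : Equiv.Perm (Fin n), f ∘ π = g := by
  have hroots (f : Fin n → R) : (∏ s, (X - C (f s))).roots = (List.ofFn f : Multiset R) := by
    rw [← Fin.univ_val_map, ← roots_multiset_prod_X_sub_C (univ.val.map f), Multiset.map_map]
    rfl
  exact exists_perm_comp_eq_of_perm_ofFn (Multiset.coe_eq_coe.1 (by rw [← hroots, ← hroots, h]))

theorem Finset.sum_mul_sum_eq_card_mul_sum_mul {ι R : Type*} [CommSemiring R] {s : Finset ι}
    {a : ι → R} (ha : ∀ x ∈ s, ∀ y ∈ s, a x = a y) (b : ι → R) :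
    (∑ x ∈ s, a x) * ∑ x ∈ s, b x = #s * ∑ x ∈ s, a x * b x := by
  obtain rfl | ⟨x₀, hx₀⟩ := s.eq_empty_or_nonempty
  · simp
  rw [sum_congr rfl fun x hx => ha x hx x₀ hx₀,
    sum_congr rfl fun x hx => congrArg (· * b x) (ha x hx x₀ hx₀), sum_const, ← mul_sum,
    nsmul_eq_mul]
  ring

theorem Matrix.prod_mul_apply {κ ι R : Type*} [Fintype κ] [DecidableEq κ] [Fintype ι]
    [CommSemiring R] (M N : Matrix ι ι R) (p q : κ → ι) :
    ∏ ℓ, (M * N) (p ℓ) (q ℓ) =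
      ∑ s : κ → ι, (∏ ℓ, M (p ℓ) (s ℓ)) * ∏ ℓ, N (s ℓ) (q ℓ) := by
  simp only [mul_apply, Fintype.prod_sum, prod_mul_distrib]

theorem Matrix.prod_diagonal_apply {κ ι R : Type*} [Fintype κ] [DecidableEq ι]
    [CommMonoidWithZero R] (μ : ι → R) (p q : κ → ι) :
    ∏ ℓ, diagonal μ (p ℓ) (q ℓ) = if p = q then ∏ ℓ, μ (p ℓ) else 0 := by
  split_ifs with h
  · simp [h]
  · obtain ⟨ℓ, hℓ⟩ := Function.ne_iff.mp h
    exact prod_eq_zero (mem_univ ℓ) (diagonal_apply_ne μ hℓ)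

theorem sum_sym_prod_map_comp_perm {ι R : Type*} [Fintype ι] [DecidableEq ι] [CommSemiring R]
    (k : ℕ) (f : ι → R) (π : Equiv.Perm ι) :
    ∑ i : Sym ι k, ((i : Multiset ι).map (f ∘ π)).prod =
      ∑ i : Sym ι k, ((i : Multiset ι).map f).prod := by
  refine Fintype.sum_equiv (Sym.equivCongr π) _ _ fun i => ?_
  simp [Sym.equivCongr, Multiset.map_map]

section tuplesOf

variable {n k : ℕ} {i : Sym (Fin n) k} {p q : Fin k → Fin n}

theorem mem_tuplesOf : p ∈ tuplesOf i ↔ (List.ofFn p : Multiset (Fin n)) = i := by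
  simp [tuplesOf]

theorem comp_perm_mem_tuplesOf_iff (σ : Equiv.Perm (Fin k)) :
    p ∘ σ ∈ tuplesOf i ↔ p ∈ tuplesOf i := by
  rw [mem_tuplesOf, mem_tuplesOf, Multiset.coe_eq_coe.2 (σ.ofFn_comp_perm p)]

theorem exists_perm_comp_eq_of_mem_tuplesOf (hp : p ∈ tuplesOf i) (hq : q ∈ tuplesOf i) :
    ∃ σ : Equiv.Perm (Fin k), p ∘ σ = q :=
  exists_perm_comp_eq_of_perm_ofFn <|
    Multiset.coe_eq_coe.1 ((mem_tuplesOf.1 hp).trans (mem_tuplesOf.1 hq).symm)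

theorem tuplesOf_nonempty (i : Sym (Fin n) k) : (tuplesOf i).Nonempty := by
  obtain ⟨m, hm⟩ := i
  obtain rfl : m.toList.length = k := by rw [Multiset.length_toList, hm]
  exact ⟨m.toList.get, mem_tuplesOf.2 (by rw [List.ofFn_get, Multiset.coe_toList]; rfl)⟩

theorem prod_comp_eq_prod_map_of_mem_tuplesOf {M : Type*} [CommMonoid M] (f : Fin n → M)
    (hp : p ∈ tuplesOf i) : ∏ ℓ, f (p ℓ) = ((i : Multiset (Fin n)).map f).prod := by
  rw [← mem_tuplesOf.1 hp, Multiset.map_coe, Multiset.prod_coe, List.map_ofFn, List.prod_ofFn]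
  rfl

theorem sum_tuplesOf_comp_perm {M : Type*} [AddCommMonoid M] (F : (Fin k → Fin n) → M)
    (σ : Equiv.Perm (Fin k)) : ∑ p ∈ tuplesOf i, F (p ∘ σ) = ∑ p ∈ tuplesOf i, F p :=
  sum_equiv (σ.symm.arrowCongr (Equiv.refl (Fin n)))
    (fun _ => (comp_perm_mem_tuplesOf_iff σ).symm) fun _ _ => rfl

theorem sum_sum_tuplesOf {M : Type*} [AddCommMonoid M] (F : (Fin k → Fin n) → M) :
    ∑ i : Sym (Fin n) k, ∑ p ∈ tuplesOf i, F p = ∑ p, F p := by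
  rw [← sum_fiberwise univ
    (fun p => (Sym.mk (List.ofFn p : Multiset (Fin n)) (by simp) : Sym (Fin n) k)) F]
  refine sum_congr rfl fun i _ => sum_congr ?_ fun _ _ => rfl
  ext p
  simp [mem_tuplesOf, Sym.ext_iff]

theorem sum_tuplesOf_eq_of_mem_tuplesOf {R : Type*} [AddCommMonoid R] {r : Sym (Fin n) k}
    {G : (Fin k → Fin n) → (Fin k → Fin n) → R}
    (hG : ∀ p s (σ : Equiv.Perm (Fin k)), G (p ∘ σ) (s ∘ σ) = G p s)
    {s s' : Fin k → Fin n} (hs : s ∈ tuplesOf r) (hs' : s' ∈ tuplesOf r) :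
    ∑ p ∈ tuplesOf i, G p s = ∑ p ∈ tuplesOf i, G p s' := by
  obtain ⟨σ, rfl⟩ := exists_perm_comp_eq_of_mem_tuplesOf hs hs'
  rw [← sum_tuplesOf_comp_perm (G · (s ∘ σ)) σ]
  exact sum_congr rfl fun p _ => (hG p s σ).symm

end tuplesOf

def unnormalizedSymPow {n : ℕ} {R : Type*} [CommSemiring R] (k : ℕ)
    (A : Matrix (Fin n) (Fin n) R) :
    Matrix (Sym (Fin n) k) (Sym (Fin n) k) R := fun i j =>
  ∑ p ∈ tuplesOf i, ∑ q ∈ tuplesOf j, ∏ ℓ, A (p ℓ) (q ℓ)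

section symPow

variable {n k : ℕ}

theorem unnormalizedSymPow_diagonal {R : Type*} [CommSemiring R] (μ : Fin n → R) :
    unnormalizedSymPow k (diagonal μ) =
      diagonal fun i => #(tuplesOf i) * ((i : Multiset (Fin n)).map μ).prod := by
  ext i j
  simp only [unnormalizedSymPow, prod_diagonal_apply, sum_ite_eq]
  rw [diagonal_apply]
  split_ifs with hij
  · subst hij
    rw [sum_congr rfl fun p hp => if_pos hp, sum_congr rfl fun p hp =>
      prod_comp_eq_prod_map_of_mem_tuplesOf μ hp, sum_const, nsmul_eq_mul]
  · refine sum_eq_zero fun p hp => if_neg fun hpj => hij ?_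
    exact Sym.coe_injective ((mem_tuplesOf.1 hp).symm.trans (mem_tuplesOf.1 hpj))

theorem unnormalizedSymPow_mul_diagonal_mul {R : Type*} [Field R] [CharZero R]
    (M N : Matrix (Fin n) (Fin n) R) :
    unnormalizedSymPow k M * diagonal (fun r => (#(tuplesOf r) : R)⁻¹) *
      unnormalizedSymPow k N = unnormalizedSymPow k (M * N) := by
  ext i j
  have hrow : ∀ r, ∀ s ∈ tuplesOf r, ∀ s' ∈ tuplesOf r,
      ∑ p ∈ tuplesOf i, ∏ ℓ, M (p ℓ) (s ℓ) =
        ∑ p ∈ tuplesOf i, ∏ ℓ, M (p ℓ) (s' ℓ) :=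
    fun _ _ hs _ hs' => sum_tuplesOf_eq_of_mem_tuplesOf (G := fun p s => ∏ ℓ, M (p ℓ) (s ℓ))
      (fun p s σ => Equiv.prod_comp σ fun ℓ => M (p ℓ) (s ℓ)) hs hs'
  have hcard : ∀ r : Sym (Fin n) k, (#(tuplesOf r) : R) ≠ 0 := fun r => by
    simpa using (tuplesOf_nonempty r).card_pos.ne'
  calc _ = ∑ r, (#(tuplesOf r) : R)⁻¹ *
          ((∑ s ∈ tuplesOf r, ∑ p ∈ tuplesOf i, ∏ ℓ, M (p ℓ) (s ℓ)) *
            ∑ s ∈ tuplesOf r, ∑ q ∈ tuplesOf j, ∏ ℓ, N (s ℓ) (q ℓ)) := by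
        rw [mul_apply]
        simp only [mul_diagonal, unnormalizedSymPow]
        refine sum_congr rfl fun r _ => ?_
        rw [sum_comm (s := tuplesOf i)]
        ring
    _ = ∑ r, ∑ s ∈ tuplesOf r, (∑ p ∈ tuplesOf i, ∏ ℓ, M (p ℓ) (s ℓ)) *
          ∑ q ∈ tuplesOf j, ∏ ℓ, N (s ℓ) (q ℓ) := by
        refine sum_congr rfl fun r _ => ?_
        rw [sum_mul_sum_eq_card_mul_sum_mul (hrow r), inv_mul_cancel_left₀ (hcard r)]
    _ = ∑ p ∈ tuplesOf i, ∑ q ∈ tuplesOf j, ∑ s : Fin k → Fin n,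
          (∏ ℓ, M (p ℓ) (s ℓ)) * ∏ ℓ, N (s ℓ) (q ℓ) := by
        rw [sum_sum_tuplesOf]
        simp only [sum_mul_sum]
        rw [sum_comm]
        exact sum_congr rfl fun p _ => sum_comm
    _ = unnormalizedSymPow k (M * N) i j := by
        simp only [unnormalizedSymPow, prod_mul_apply]

theorem symPow_eq_diagonal_mul_unnormalizedSymPow_mul_diagonal
    (A : Matrix (Fin n) (Fin n) ℝ) :
    symPow k A = diagonal (fun i => (√(#(tuplesOf i) : ℝ))⁻¹) * unnormalizedSymPow k A *
      diagonal (fun i => (√(#(tuplesOf i) : ℝ))⁻¹) := by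
  ext i j
  rw [mul_diagonal, diagonal_mul, symPow, unnormalizedSymPow,
    Real.sqrt_mul (Nat.cast_nonneg _), mul_inv]
  ring

theorem symPow_mul (M N : Matrix (Fin n) (Fin n) ℝ) :
    symPow k (M * N) = symPow k M * symPow k N := by
  have hw : (diagonal fun i : Sym (Fin n) k => (√(#(tuplesOf i) : ℝ))⁻¹) *
      diagonal (fun i => (√(#(tuplesOf i) : ℝ))⁻¹) =
        diagonal fun r => (#(tuplesOf r) : ℝ)⁻¹ := by
    rw [diagonal_mul_diagonal]
    congr 1
    funext r
    rw [← mul_inv, Real.mul_self_sqrt (Nat.cast_nonneg _)]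
  simp only [symPow_eq_diagonal_mul_unnormalizedSymPow_mul_diagonal,
    ← unnormalizedSymPow_mul_diagonal_mul M N, ← hw, Matrix.mul_assoc]

theorem symPow_diagonal (μ : Fin n → ℝ) :
    symPow k (diagonal μ) =
      diagonal fun i : Sym (Fin n) k => ((i : Multiset (Fin n)).map μ).prod := by
  rw [symPow_eq_diagonal_mul_unnormalizedSymPow_mul_diagonal, unnormalizedSymPow_diagonal,
    diagonal_mul_diagonal, diagonal_mul_diagonal]
  congr 1
  funext i
  have hsqrt : √(#(tuplesOf i) : ℝ) ≠ 0 := by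
    simpa using (tuplesOf_nonempty i).card_pos.ne'
  field_simp
  rw [Real.sq_sqrt (Nat.cast_nonneg _)]

theorem symPow_one : symPow k (1 : Matrix (Fin n) (Fin n) ℝ) = 1 := by
  simpa using symPow_diagonal (k := k) (fun _ : Fin n => (1 : ℝ))

theorem trace_symPow_conj {U D V : Matrix (Fin n) (Fin n) ℝ} (hVU : V * U = 1) :
    (symPow k (U * D * V)).trace = (symPow k D).trace := by
  rw [symPow_mul, symPow_mul, trace_mul_comm, ← Matrix.mul_assoc, ← symPow_mul, hVU, symPow_one,
    Matrix.one_mul]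

end symPow

open Polynomial in
theorem symPow_trace_general {n : ℕ} (k : ℕ)
    (A : Matrix (Fin n) (Fin n) ℝ) (hA : ∀ a b, A a b = A b a) (lam : Fin n → ℝ)
    (hchar : A.charpoly = ∏ s : Fin n, (X - C (lam s))) :
    (symPow k A).trace = ∑ i : Sym (Fin n) k, ((i : Multiset (Fin n)).map lam).prod := by
  have hA' : A.IsHermitian := Matrix.ext fun a b => hA b a
  obtain ⟨π, hπ⟩ := exists_perm_comp_eq_of_prod_X_sub_C_eq
    (hchar.symm.trans (by simpa using hA'.charpoly_eq) : _ = ∏ s, (X - C (hA'.eigenvalues s)))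
  have hspec : A = hA'.eigenvectorUnitary * diagonal hA'.eigenvalues *
      star (hA'.eigenvectorUnitary : Matrix (Fin n) (Fin n) ℝ) := by
    simpa [Unitary.coe_star] using hA'.spectral_theorem
  rw [hspec, trace_symPow_conj (Unitary.coe_star_mul_self _), symPow_diagonal, trace_diagonal,
    ← hπ, sum_sym_prod_map_comp_perm]

open Polynomial in
/-- if the characteristic polynomial of a symmetric real matrix `A` splits as
`∏ (X - λ_s)`, then `trace(A^{⊙k}) = Σ_i ∏_{s∈i} λ_s`, the sum running over all multisets `i`
of size `k` over `{1,…,n}`; this is the complete homogeneous symmetric polynomial of degree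
`k` in `λ_1,…,λ_n`. -/
theorem symPow_trace {n : ℕ} (k : ℕ) (hk : 1 ≤ k)
    (A : Matrix (Fin n) (Fin n) ℝ) (hA : ∀ a b, A a b = A b a) (lam : Fin n → ℝ)
    (hchar : A.charpoly = ∏ s : Fin n, (X - C (lam s))) :
    (symPow k A).trace = ∑ i : Sym (Fin n) k, ((i : Multiset (Fin n)).map lam).prod :=
  symPow_trace_general k A hA lam hchar
end

section
/- Let k ≥ 1. (a) If G is a connected, non-bipartite finite simple graph (undirected, loopless), then G^{⊙k} is connected. (b) For every connected finite undirected graph G (possibly with loops), the number of connected components of G^{⊙k} is at most 2^{k−1}. -/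
/-!
Walks of a common length `N` from the coordinates of a tuple `p` to those of a tuple `q` move
the multiset of `p` to that of `q` in `N` steps of `G^{⊙k}`. Going back and forth along an edge
lengthens a walk by `2`, so in a connected graph every vertex reaches a fixed vertex `v` by walks
of all large lengths of one parity, and an odd closed walk at `v` (which exists iff `G` is not
bipartite) supplies the other parity: then every multiset is joined to the constant one at `v`.
In general, fix an edge `vx`; a walk of any large length ends at `v` or `x`, and at `v` for the
first coordinate if the length has the right parity. So every component of `G^{⊙(n+1)}`
contains a multiset `{v, c₁, …, cₙ}` with all `cᵢ ∈ {v, x}`; there are at most `2ⁿ` of these.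
-/

/-- Adjacency in the (unweighted) `k`-th symmetric tensor power of a graph given by an
adjacency relation `adj` on `V`: multisets `i` and `j` of size `k` are adjacent iff there are
`k`-tuples `p, q` with underlying multisets `i` and `j` such that `p ℓ` is adjacent to `q ℓ`
for every `ℓ`. -/
def symPowAdj {V : Type*} (adj : V → V → Prop) (k : ℕ) (i j : Sym V k) : Prop :=
  ∃ p q : Fin k → V,
    (↑(List.ofFn p) : Multiset V) = ↑i ∧ (↑(List.ofFn q) : Multiset V) = ↑j ∧
    ∀ ℓ : Fin k, adj (p ℓ) (q ℓ)

namespace Sym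

variable {α : Type*} {k : ℕ}

def ofFn (p : Fin k → α) : Sym α k :=
  ⟨List.ofFn p, by simp⟩

theorem exists_ofFn_eq (s : Sym α k) : ∃ p : Fin k → α, ofFn p = s := by
  obtain ⟨s, hs⟩ := s
  induction s using Quotient.inductionOn with
  | h l =>
    have hl : l.length = k := by simpa using hs
    subst hl
    exact ⟨l.get, Subtype.ext (by simp [ofFn, List.ofFn_get])⟩

end Sym

namespace SimpleGraph

variable {V : Type*} {G : SimpleGraph V}

theorem Walk.exists_length_eq_add_two_mul {u v x : V} (w : G.Walk u v) (h : G.Adj v x)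
    (m : ℕ) : ∃ w' : G.Walk u v, w'.length = w.length + 2 * m := by
  induction m with
  | zero => exact ⟨w, rfl⟩
  | succ m ih =>
    obtain ⟨w', hw'⟩ := ih
    exact ⟨(w'.concat h).concat h.symm, by simp [hw']; ring⟩

theorem Walk.exists_bool_length_eq {u v x : V} (w : G.Walk u v) (h : G.Adj v x) {N : ℕ}
    (hN : w.length ≤ N) : ∃ b : Bool, ∃ w' : G.Walk u (cond b x v), w'.length = N := by
  rcases Nat.even_or_odd' (N - w.length) with ⟨m, hm | hm⟩
  · obtain ⟨w', hw'⟩ := w.exists_length_eq_add_two_mul h m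
    exact ⟨false, w', by omega⟩
  · obtain ⟨w', hw'⟩ := (w.concat h).exists_length_eq_add_two_mul h.symm m
    exact ⟨true, w', by rw [Walk.length_concat] at hw'; omega⟩

theorem Connected.exists_walk_length_eq_of_odd {v : V} (hG : G.Connected) (c : G.Walk v v)
    (hc : Odd c.length) (u : V) {N : ℕ} (hN : G.dist u v + c.length ≤ N) :
    ∃ w : G.Walk u v, w.length = N := by
  have hv : G.Adj v c.snd :=
    c.adj_snd (by rw [← Walk.length_eq_zero_iff]; rintro h; simp [h] at hc)
  obtain ⟨w, hw⟩ := hG.exists_walk_length_eq_dist u v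
  obtain ⟨l, hl⟩ := hc
  rcases Nat.even_or_odd' (N - w.length) with ⟨m, hm | hm⟩
  · obtain ⟨w', hw'⟩ := w.exists_length_eq_add_two_mul hv m
    exact ⟨w', by omega⟩
  · obtain ⟨w', hw'⟩ := (w.append c).exists_length_eq_add_two_mul hv (m - l)
    exact ⟨w', by rw [Walk.length_append] at hw'; omega⟩

end SimpleGraph

open SimpleGraph

section SymPow

variable {V : Type*} {adj : V → V → Prop}

theorem reachable_symPowAdj_of_forall_adj {k : ℕ} {p q : Fin k → V}
    (h : ∀ ℓ, adj (p ℓ) (q ℓ)) :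
    (fromRel (symPowAdj adj k)).Reachable (Sym.ofFn p) (Sym.ofFn q) := by
  by_cases hpq : Sym.ofFn p = Sym.ofFn q
  · rw [hpq]
  · exact Adj.reachable ⟨hpq, Or.inl ⟨p, q, rfl, rfl, h⟩⟩

theorem reachable_symPowAdj_of_forall_walk {G : SimpleGraph V}
    (hA : ∀ a b, G.Adj a b → adj a b) {k : ℕ} {p q : Fin k → V} {N : ℕ}
    (h : ∀ ℓ, ∃ w : G.Walk (p ℓ) (q ℓ), w.length = N) :
    (fromRel (symPowAdj adj k)).Reachable (Sym.ofFn p) (Sym.ofFn q) := by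
  choose w hw using h
  have hstep : ∀ n ≤ N, (fromRel (symPowAdj adj k)).Reachable (Sym.ofFn p)
      (Sym.ofFn fun ℓ => (w ℓ).getVert n) := by
    intro n hn
    induction n with
    | zero => simp only [Walk.getVert_zero]; rfl
    | succ n ih =>
      refine (ih (by omega)).trans (reachable_symPowAdj_of_forall_adj fun ℓ => hA _ _ ?_)
      exact (w ℓ).adj_getVert_succ (by rw [hw]; omega)
  have hq : (fun ℓ => (w ℓ).getVert N) = q :=
    funext fun ℓ => by rw [← hw ℓ, Walk.getVert_length]
  simpa only [hq] using hstep N le_rfl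

theorem SimpleGraph.Connected.connected_fromRel_symPowAdj {G : SimpleGraph V}
    (hG : G.Connected) (hbip : ¬ G.Colorable 2) (k : ℕ) :
    (fromRel (symPowAdj G.Adj k)).Connected := by
  obtain ⟨v, c, hc⟩ : ∃ v, ∃ c : G.Walk v v, Odd c.length := by
    simpa [two_colorable_iff_forall_loop_even] using hbip
  have hreach (p : Fin k → V) :
      (fromRel (symPowAdj G.Adj k)).Reachable (Sym.ofFn p) (Sym.ofFn fun _ => v) := by
    refine reachable_symPowAdj_of_forall_walk (fun _ _ h => h)
      (N := c.length + Finset.univ.sup fun ℓ => G.dist (p ℓ) v) fun ℓ => ?_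
    have := Finset.le_sup (f := fun ℓ => G.dist (p ℓ) v) (Finset.mem_univ ℓ)
    exact hG.exists_walk_length_eq_of_odd c hc (p ℓ) (by omega)
  have : Nonempty (Sym V k) := ⟨Sym.ofFn fun _ => v⟩
  refine ⟨fun i j => ?_⟩
  obtain ⟨p, rfl⟩ := i.exists_ofFn_eq
  obtain ⟨q, rfl⟩ := j.exists_ofFn_eq
  exact (hreach p).trans (hreach q).symm

theorem exists_reachable_symPowAdj_ofFn_cons {G : SimpleGraph V} (hG : G.Connected)
    (hA : ∀ a b, G.Adj a b → adj a b) {v x : V} (h : G.Adj v x) {n : ℕ}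
    (p : Fin (n + 1) → V) :
    ∃ b : Fin n → Bool, (fromRel (symPowAdj adj (n + 1))).Reachable (Sym.ofFn p)
      (Sym.ofFn fun ℓ => cond ((Fin.cons false b : Fin (n + 1) → Bool) ℓ) x v) := by
  choose W hW using fun ℓ => hG.exists_walk_length_eq_dist (p ℓ) v
  set M := Finset.univ.sup fun ℓ => G.dist (p ℓ) v
  have hM (ℓ) : (W ℓ).length ≤ M :=
    (hW ℓ).trans_le <| Finset.le_sup (f := fun ℓ => G.dist (p ℓ) v) (Finset.mem_univ ℓ)
  have hsucc (j : Fin n) : ∃ b : Bool, ∃ w : G.Walk (p j.succ) (cond b x v),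
      w.length = (W 0).length + 2 * M :=
    (W j.succ).exists_bool_length_eq h (by have := hM j.succ; omega)
  choose b hb using hsucc
  refine ⟨b, reachable_symPowAdj_of_forall_walk hA (N := (W 0).length + 2 * M) fun ℓ => ?_⟩
  cases ℓ using Fin.cases with
  | zero => exact (W 0).exists_length_eq_add_two_mul h M
  | succ j => exact hb j

theorem card_connectedComponent_fromRel_symPowAdj_le [Std.Symm adj]
    (hconn : (fromRel adj).Connected) (n : ℕ) :
    Nat.card (fromRel (symPowAdj adj (n + 1))).ConnectedComponent ≤ 2 ^ n := by
  rcases subsingleton_or_nontrivial V with hV | hV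
  · exact (Finite.card_le_one_iff_subsingleton.mpr inferInstance).trans Nat.one_le_two_pow
  obtain ⟨v⟩ := hconn.nonempty
  obtain ⟨x, h⟩ := hconn.preconnected.exists_adj_of_nontrivial v
  have hA (a b : V) (hab : (fromRel adj).Adj a b) : adj a b := hab.2.elim id (symm_of adj)
  have hsurj : Function.Surjective fun b : Fin n → Bool =>
      (fromRel (symPowAdj adj (n + 1))).connectedComponentMk
        (Sym.ofFn fun ℓ => cond ((Fin.cons false b : Fin (n + 1) → Bool) ℓ) x v) := by
    intro C
    induction C using ConnectedComponent.ind with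
    | h i =>
      obtain ⟨p, rfl⟩ := i.exists_ofFn_eq
      obtain ⟨b, hb⟩ := exists_reachable_symPowAdj_ofFn_cons hconn hA h p
      exact ⟨b, (ConnectedComponent.sound hb).symm⟩
  calc _ ≤ Nat.card (Fin n → Bool) := Nat.card_le_card_of_surjective _ hsurj
    _ = 2 ^ n := by simp

end SymPow

/-- for `k ≥ 1`: (a) if `G` is a connected non-bipartite finite simple graph,
then `G^{⊙k}` is connected; (b) for every connected finite undirected graph `G` (possibly
with loops, connectivity being taken of the underlying loopless graph), `G^{⊙k}` has at most
`2^{k−1}` connected components. -/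
theorem symPow_components_bound (k : ℕ) (hk : 1 ≤ k) :
    (∀ (V : Type) [Fintype V] (G : SimpleGraph V), G.Connected → ¬ G.Colorable 2 →
      (SimpleGraph.fromRel (symPowAdj G.Adj k)).Connected) ∧
    (∀ (V : Type) [Fintype V] (adj : V → V → Prop), Symmetric adj →
      (SimpleGraph.fromRel adj).Connected →
      Nat.card (SimpleGraph.fromRel (symPowAdj adj k)).ConnectedComponent ≤ 2 ^ (k - 1)) := by
  refine ⟨fun V _ G hG hbip => hG.connected_fromRel_symPowAdj hbip k,
    fun V _ adj hsymm hconn => ?_⟩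
  have : Std.Symm adj := ⟨fun _ _ => @hsymm _ _⟩
  obtain ⟨n, rfl⟩ : ∃ n, k = n + 1 := ⟨k - 1, by omega⟩
  exact card_connectedComponent_fromRel_symPowAdj_le hconn n
end
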